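/- arXiv:1212.0915 — 6 statements merged into one kernel-verified Lean document; each statement's English description precedes it below -/
import Mathlib

section
/- Let p ≥ 5 be prime and s an integer with gcd(s(s+1), p) = 1. Define θ(s) as the Legendre symbol of 2s(s+1)(s·q_p(s) - (s+1)·q_p(s+1)) modulo p. Let t be an integer with t ≡ -1 - s (mod p) and gcd(t(t+1), p) = 1. Then θ(t) = θ(s). -/
/-- The Fermat quotient of `u` modulo `p`: the unique integer in `[0, p)`
congruent to `(u^(p-1) - 1)/p` modulo `p`. -/
def fermatQuotient (p : ℕ) (u : ℤ) : ℤ := ((u ^ (p - 1) - 1) / (p : ℤ)) % (p : ℤ)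

/-- `θ_{p,s}`: the Legendre symbol of `2s(s+1)(s·q_p(s) - (s+1)·q_p(s+1))` modulo `p`. -/
def theta (p : ℕ) [Fact p.Prime] (s : ℤ) : ℤ :=
  legendreSym p (2 * s * (s + 1) *
    (s * fermatQuotient p s - (s + 1) * fermatQuotient p (s + 1)))

/-!
By the binomial theorem, `(u + kp)^(p-1) ≡ u^(p-1) - k p u^(p-2) (mod p²)`, so moving `u` by `kp`
changes `u · q_p(u)` by exactly `-k` modulo `p`; moreover `q_p(-u) = q_p(u)` as `p - 1` is even.
Writing `t = -(s+1) - kp`, both `t q_p(t)` and `(t+1) q_p(t+1)` are thus congruent to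
`-(s+1) q_p(s+1) + k` and `-s q_p(s) + k`, the shifts cancel in their difference, and
`2t(t+1) ≡ 2s(s+1)`: the two Legendre symbols have congruent arguments.
-/

lemma fermatQuotient_neg {p : ℕ} (hp : Even (p - 1)) (u : ℤ) :
    fermatQuotient p (-u) = fermatQuotient p u := by
  rw [fermatQuotient, fermatQuotient, hp.neg_pow]

lemma natCast_dvd_pow_card_sub_one_sub_one {p : ℕ} [Fact p.Prime] {u : ℤ}
    (hu : (u : ZMod p) ≠ 0) : (p : ℤ) ∣ u ^ (p - 1) - 1 := by
  rw [← ZMod.intCast_zmod_eq_zero_iff_dvd]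
  push_cast
  rw [ZMod.pow_card_sub_one_eq_one hu, sub_self]

lemma intCast_fermatQuotient (p : ℕ) (u : ℤ) :
    (fermatQuotient p u : ZMod p) = (((u ^ (p - 1) - 1) / p : ℤ) : ZMod p) :=
  ZMod.intCast_mod _ p

lemma intCast_mul_fermatQuotient_add_mul_self {p : ℕ} [Fact p.Prime] {u : ℤ}
    (hu : (u : ZMod p) ≠ 0) (k : ℤ) :
    (u : ZMod p) * fermatQuotient p (u + k * p) = u * fermatQuotient p u - k := by
  have hp := (Fact.out : p.Prime)
  have hukp : ((u + k * p : ℤ) : ZMod p) = u := by simp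
  obtain ⟨c, hc⟩ := sq_dvd_add_pow_sub_sub (k * p) u (p - 1)
  have hdiff : (u + k * p) ^ (p - 1) - 1 - (u ^ (p - 1) - 1)
      = p * (u ^ (p - 1 - 1) * k * (p - 1 : ℕ) + k ^ 2 * p * c) := by
    linear_combination hc
  rw [← Int.mul_ediv_cancel' (natCast_dvd_pow_card_sub_one_sub_one (hukp ▸ hu)),
    ← Int.mul_ediv_cancel' (natCast_dvd_pow_card_sub_one_sub_one hu), ← mul_sub] at hdiff
  have hq := congrArg (Int.cast : ℤ → ZMod p)
    (mul_left_cancel₀ (by exact_mod_cast hp.ne_zero) hdiff)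
  have hfermat : (u : ZMod p) * u ^ (p - 1 - 1) = 1 := by
    rw [← pow_succ', Nat.sub_add_cancel (Nat.le_sub_one_of_lt hp.one_lt)]
    exact ZMod.pow_card_sub_one_eq_one hu
  push_cast [Nat.cast_sub hp.one_le, ZMod.natCast_self] at hq
  rw [intCast_fermatQuotient, intCast_fermatQuotient]
  linear_combination (u : ZMod p) * hq - k * hfermat

lemma intCast_mul_fermatQuotient_neg_add_mul_self {p : ℕ} [hp : Fact p.Prime] (hp2 : p ≠ 2)
    {u : ℤ} (hu : (u : ZMod p) ≠ 0) (k : ℤ) :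
    ((-u + k * p : ℤ) : ZMod p) * fermatQuotient p (-u + k * p) =
      -(u * fermatQuotient p u) - k := by
  have hneg : ((-u + k * p : ℤ) : ZMod p) = ((-u : ℤ) : ZMod p) := by simp
  rw [hneg, intCast_mul_fermatQuotient_add_mul_self (by simpa using hu),
    fermatQuotient_neg (hp.out.even_sub_one hp2)]
  push_cast
  ring

lemma intCast_ne_zero_of_gcd_eq_one {p : ℕ} [Fact (1 < p)] {a : ℤ} (h : Int.gcd a p = 1) :
    (a : ZMod p) ≠ 0 := by
  rw [Ne, ZMod.intCast_zmod_eq_zero_iff_dvd]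
  intro hdvd
  have hp1 : (p : ℤ) ∣ (1 : ℕ) := h ▸ Int.dvd_coe_gcd hdvd dvd_rfl
  exact (Fact.out : 1 < p).ne' (Nat.dvd_one.mp (Int.natCast_dvd_natCast.mp hp1))

theorem theta_neg_one_sub_general (p : ℕ) [Fact p.Prime] (s t : ℤ)
    (hs : Int.gcd (s * (s + 1)) (p : ℤ) = 1)
    (hts : t ≡ -1 - s [ZMOD (p : ℤ)]) :
    theta p t = theta p s := by
  have hss1 : ((s * (s + 1) : ℤ) : ZMod p) ≠ 0 := intCast_ne_zero_of_gcd_eq_one hs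
  have hp2 : p ≠ 2 := by
    rintro rfl
    exact hss1 ((ZMod.intCast_zmod_eq_zero_iff_dvd _ 2).2 (Int.two_dvd_mul_add_one s))
  push_cast at hss1
  obtain ⟨hs0, hs1⟩ := mul_ne_zero_iff.mp hss1
  obtain ⟨k, hk⟩ := hts.dvd
  have ht : t = -(s + 1) + -k * p := by linarith
  have ht1 : t + 1 = -s + -k * p := by linarith
  have htq :=
    intCast_mul_fermatQuotient_neg_add_mul_self hp2 (u := s + 1) (by exact_mod_cast hs1) (-k)
  have ht1q := intCast_mul_fermatQuotient_neg_add_mul_self hp2 hs0 (-k)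
  rw [← ht] at htq
  rw [← ht1] at ht1q
  have htc : (t : ZMod p) = -(s + 1) := by rw [ht]; simp
  unfold theta legendreSym
  congr 1
  push_cast at htq ht1q ⊢
  rw [htq, ht1q, htc]
  ring

theorem theta_neg_one_sub (p : ℕ) [Fact p.Prime] (hp : 5 ≤ p) (s t : ℤ)
    (hs : Int.gcd (s * (s + 1)) (p : ℤ) = 1)
    (ht : Int.gcd (t * (t + 1)) (p : ℤ) = 1)
    (hts : t ≡ -1 - s [ZMOD (p : ℤ)]) :
    theta p t = theta p s :=
  theta_neg_one_sub_general p s t hs hts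
end

section
/- Let p ≥ 5 be prime and s an integer with gcd(s(s+1), p) = 1. Define θ(s) as the Legendre symbol of 2s(s+1)(s·q_p(s) - (s+1)·q_p(s+1)) modulo p. Let t be an integer with t·s ≡ 1 (mod p) and gcd(t(t+1), p) = 1. Then θ(t) = θ(s). -/
/-!
Reduced modulo `p`, the Fermat quotient is a logarithm: `q(uv) = q(u) + q(v)`, and
`q(a + pm) = q(a) - m/a` by the binomial theorem modulo `p²`. Writing `ts = 1 + pk`, these give
`q(t) = -k - q(s)` and, from `s(t+1) = (s+1) + pk`, `q(t+1) = q(s+1) - q(s) - k/(s+1)`.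
Substituting, the argument of the Legendre symbol in `θ(t)` is `s⁻⁴` times the one in `θ(s)`,
and a nonzero square does not change a Legendre symbol.
-/

lemma fermatQuotient_one (p : ℕ) : fermatQuotient p 1 = 0 := by
  simp [fermatQuotient]

section FermatQuotient

variable {p : ℕ} [Fact p.Prime]

lemma natCast_mul_fermatQuotient_modEq {u : ℤ} (hu : (u : ZMod p) ≠ 0) :
    (p : ℤ) * fermatQuotient p u ≡ u ^ (p - 1) - 1 [ZMOD (p : ℤ) ^ 2] := by
  have hp0 : (p : ℤ) ≠ 0 := by exact_mod_cast (Fact.out : p.Prime).ne_zero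
  obtain ⟨Q, hQ⟩ : (p : ℤ) ∣ u ^ (p - 1) - 1 := by
    rw [← ZMod.intCast_zmod_eq_zero_iff_dvd]
    push_cast
    rw [ZMod.pow_card_sub_one_eq_one hu, sub_self]
  rw [fermatQuotient, hQ, Int.mul_ediv_cancel_left _ hp0, Int.modEq_iff_dvd]
  exact ⟨Q / p, by rw [Int.emod_def]; ring⟩

lemma intCast_fermatQuotient_eq_of_modEq {u c : ℤ} (hu : (u : ZMod p) ≠ 0)
    (h : (p : ℤ) * c ≡ u ^ (p - 1) - 1 [ZMOD (p : ℤ) ^ 2]) :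
    (fermatQuotient p u : ZMod p) = c := by
  have hp0 : (p : ℤ) ≠ 0 := by exact_mod_cast (Fact.out : p.Prime).ne_zero
  rw [ZMod.intCast_eq_intCast_iff]
  refine Int.ModEq.mul_left_cancel' hp0 ?_
  rw [← sq]
  exact (natCast_mul_fermatQuotient_modEq hu).trans h.symm

lemma intCast_fermatQuotient_mul {u v : ℤ} (hu : (u : ZMod p) ≠ 0) (hv : (v : ZMod p) ≠ 0) :
    (fermatQuotient p (u * v) : ZMod p) = fermatQuotient p u + fermatQuotient p v := by
  have hu' := natCast_mul_fermatQuotient_modEq hu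
  have hv' := natCast_mul_fermatQuotient_modEq hv
  rw [← Int.cast_add]
  refine intCast_fermatQuotient_eq_of_modEq (by push_cast; exact mul_ne_zero hu hv) ?_
  set a := fermatQuotient p u
  set b := fermatQuotient p v
  calc (p : ℤ) * (a + b) ≡ p * a + p * b + (p * a) * (p * b) [ZMOD (p : ℤ) ^ 2] :=
        Int.modEq_iff_dvd.mpr ⟨a * b, by ring⟩
    _ ≡ (u ^ (p - 1) - 1) + (v ^ (p - 1) - 1) + (u ^ (p - 1) - 1) * (v ^ (p - 1) - 1)
        [ZMOD (p : ℤ) ^ 2] := (hu'.add hv').add (hu'.mul hv')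
    _ = (u * v) ^ (p - 1) - 1 := by ring

lemma intCast_fermatQuotient_add_mul {a : ℤ} (m : ℤ) (ha : (a : ZMod p) ≠ 0) :
    (fermatQuotient p (a + p * m) : ZMod p) = fermatQuotient p a - m / a := by
  have hp2 : 2 ≤ p := (Fact.out : p.Prime).two_le
  have hinv : (a : ZMod p) ^ (p - 2) = (a : ZMod p)⁻¹ := by
    refine eq_inv_of_mul_eq_one_left ?_
    rw [← pow_succ, show p - 2 + 1 = p - 1 by omega, ZMod.pow_card_sub_one_eq_one ha]
  have hbinom : a ^ (p - 1) + a ^ (p - 2) * (p * m) * ((p - 1 : ℕ) : ℤ) ≡ (a + p * m) ^ (p - 1)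
      [ZMOD (p : ℤ) ^ 2] := by
    have h := sq_dvd_add_pow_sub_sub ((p : ℤ) * m) a (p - 1)
    rw [show p - 1 - 1 = p - 2 by omega] at h
    refine Int.modEq_iff_dvd.mpr ((pow_dvd_pow_of_dvd (dvd_mul_right (p : ℤ) m) 2).trans ?_)
    convert h using 1
    ring
  rw [show (fermatQuotient p a : ZMod p) - m / a =
      ((fermatQuotient p a - a ^ (p - 2) * m : ℤ) : ZMod p) by push_cast; rw [hinv]; ring]
  refine intCast_fermatQuotient_eq_of_modEq (by simpa using ha) ?_
  calc (p : ℤ) * (fermatQuotient p a - a ^ (p - 2) * m)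
      = p * fermatQuotient p a + -(p * a ^ (p - 2) * m) := by ring
    _ ≡ (a ^ (p - 1) - 1) + a ^ (p - 2) * (p * m) * ((p - 1 : ℕ) : ℤ) [ZMOD (p : ℤ) ^ 2] :=
        (natCast_mul_fermatQuotient_modEq ha).add <| Int.modEq_iff_dvd.mpr
          ⟨a ^ (p - 2) * m, by push_cast [Nat.cast_sub (by omega : 1 ≤ p)]; ring⟩
    _ ≡ (a + p * m) ^ (p - 1) - 1 [ZMOD (p : ℤ) ^ 2] := by
        convert hbinom.sub_right 1 using 1
        ring

lemma intCast_ne_zero_of_gcd_mul_add_one_eq_one {u : ℤ} (hu : Int.gcd (u * (u + 1)) p = 1) :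
    (u : ZMod p) ≠ 0 ∧ (u : ZMod p) + 1 ≠ 0 := by
  have h : ((u * (u + 1) : ℤ) : ZMod p) ≠ 0 := by
    rw [Ne, ZMod.intCast_zmod_eq_zero_iff_dvd]
    intro hdvd
    have h1 : (p : ℤ) ∣ 1 := by exact_mod_cast hu ▸ Int.dvd_coe_gcd hdvd dvd_rfl
    exact (Fact.out : p.Prime).one_lt.ne'
      (by exact_mod_cast Int.eq_one_of_dvd_one (by positivity) h1)
  push_cast at h
  exact mul_ne_zero_iff.mp h

variable {s t k : ℤ}

lemma intCast_fermatQuotient_of_mul_eq (ht : (t : ZMod p) ≠ 0) (hs : (s : ZMod p) ≠ 0)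
    (h : t * s = 1 + p * k) :
    (fermatQuotient p t : ZMod p) = -k - fermatQuotient p s := by
  have := intCast_fermatQuotient_add_mul (p := p) (a := 1) k (by simp)
  rw [← h, intCast_fermatQuotient_mul ht hs, fermatQuotient_one] at this
  rw [eq_sub_iff_add_eq, this]
  simp

lemma intCast_fermatQuotient_add_one_of_mul_eq (hs : (s : ZMod p) ≠ 0)
    (hs1 : (s : ZMod p) + 1 ≠ 0) (ht1 : (t : ZMod p) + 1 ≠ 0) (h : t * s = 1 + p * k) :
    (fermatQuotient p (t + 1) : ZMod p) =
      fermatQuotient p (s + 1) - fermatQuotient p s - k / (s + 1) := by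
  have := intCast_fermatQuotient_add_mul (p := p) (a := s + 1) k (by exact_mod_cast hs1)
  rw [show s + 1 + p * k = s * (t + 1) by linear_combination -h,
    intCast_fermatQuotient_mul hs (by exact_mod_cast ht1)] at this
  push_cast at this
  linear_combination this

end FermatQuotient

lemma quadraticChar_mul_sq {F : Type*} [Field F] [Fintype F] [DecidableEq F] (a : F) {b : F}
    (hb : b ≠ 0) : quadraticChar F (a * b ^ 2) = quadraticChar F a := by
  rw [map_mul, quadraticChar_sq_one' hb, mul_one]

lemma theta_eq_quadraticChar (p : ℕ) [Fact p.Prime] (s : ℤ) :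
    theta p s = quadraticChar (ZMod p) (2 * s * (s + 1) *
      (s * (fermatQuotient p s : ZMod p) - (s + 1) * fermatQuotient p (s + 1))) := by
  rw [theta, legendreSym]
  push_cast
  rfl

theorem theta_inv_general (p : ℕ) [Fact p.Prime] (s t : ℤ)
    (hs : Int.gcd (s * (s + 1)) (p : ℤ) = 1)
    (ht : Int.gcd (t * (t + 1)) (p : ℤ) = 1)
    (hts : t * s ≡ 1 [ZMOD (p : ℤ)]) :
    theta p t = theta p s := by
  obtain ⟨hS, hS1⟩ := intCast_ne_zero_of_gcd_mul_add_one_eq_one hs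
  obtain ⟨hT, hT1⟩ := intCast_ne_zero_of_gcd_mul_add_one_eq_one ht
  obtain ⟨k, hk⟩ := Int.modEq_iff_add_fac.mp hts.symm
  have hTS : (t : ZMod p) = (s : ZMod p)⁻¹ :=
    eq_inv_of_mul_eq_one_left (by exact_mod_cast (ZMod.intCast_eq_intCast_iff _ _ _).mpr hts)
  rw [theta_eq_quadraticChar, theta_eq_quadraticChar, intCast_fermatQuotient_of_mul_eq hT hS hk,
    intCast_fermatQuotient_add_one_of_mul_eq hS hS1 hT1 hk, hTS]
  convert quadraticChar_mul_sq (F := ZMod p) _ (inv_ne_zero (pow_ne_zero 2 hS)) using 2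
  field_simp
  ring

theorem theta_inv (p : ℕ) [Fact p.Prime] (hp : 5 ≤ p) (s t : ℤ)
    (hs : Int.gcd (s * (s + 1)) (p : ℤ) = 1)
    (ht : Int.gcd (t * (t + 1)) (p : ℤ) = 1)
    (hts : t * s ≡ 1 [ZMOD (p : ℤ)]) :
    theta p t = theta p s :=
  theta_inv_general p s t hs ht hts
end

section
/- For a prime p and integer u with gcd(u, p) = 1, (u + p)·q_p(u + p) ≡ u·q_p(u) - 1 (mod p). -/
theorem Int.add_pow_sub_one_ediv_modEq {m u : ℤ} (n : ℕ) (hm : m ≠ 0) (hdvd : m ∣ u ^ n - 1) :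
    ((u + m) ^ n - 1) / m ≡ (u ^ n - 1) / m + n * u ^ (n - 1) [ZMOD m] := by
  obtain ⟨q, hq⟩ := hdvd
  obtain ⟨c, hc⟩ := sq_dvd_add_pow_sub_sub m u n
  have hexpand : (u + m) ^ n - 1 = m * (q + n * u ^ (n - 1) + m * c) := by
    linear_combination hc + hq
  rw [hexpand, hq, Int.mul_ediv_cancel_left _ hm, Int.mul_ediv_cancel_left _ hm]
  exact Int.modEq_iff_dvd.mpr ⟨-c, by ring⟩

theorem mul_fermatQuotient_add_self (p : ℕ) (hp : p.Prime) (u : ℤ)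
    (h : Int.gcd u (p : ℤ) = 1) :
    (u + p) * fermatQuotient p (u + p) ≡ u * fermatQuotient p u - 1 [ZMOD (p : ℤ)] := by
  have hfermat : u ^ (p - 1) ≡ 1 [ZMOD p] :=
    Int.ModEq.pow_card_sub_one_eq_one hp (Int.isCoprime_iff_gcd_eq_one.mpr h)
  have hshift := Int.add_pow_sub_one_ediv_modEq (p - 1) (by exact_mod_cast hp.ne_zero)
    hfermat.symm.dvd
  have hpow : (u : ZMod p) ^ (p - 1) = u * u ^ (p - 1 - 1) := by
    rw [← pow_succ']
    congr 1
    have := hp.two_le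
    omega
  rw [← ZMod.intCast_eq_intCast_iff] at hfermat hshift ⊢
  simp only [fermatQuotient]
  push_cast [Nat.cast_pred hp.pos, ZMod.natCast_self] at hfermat hshift ⊢
  linear_combination (u : ZMod p) * hshift - hfermat + hpow
end

section
/- Let p ≥ 11 be prime with p ≡ 1 (mod 3), and let H be the group of permutations of S_p = {1,...,p-2} generated by F (s ↦ -1-s mod p) and G (s ↦ s^{-1} mod p). Then the action of H on S_p has exactly (p+5)/6 orbits: the orbit {1, (p-1)/2, p-2} of size 3, one orbit of size 2 consisting of the two roots of x²+x+1 ≡ 0 mod p, and (p-7)/6 orbits of size 6. -/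
/-!
`F` and `G` are involutions and `F G F = G F G` (both are `s ↦ -s / (s + 1)`), so `H`
consists of `1, F, G, FG, GF, FGF`; as `F ≠ 1` and `FG` has order `3`, `|H| = 6`. Hence an
orbit has six points unless one of its points is fixed by a non-identity element. The fixed
points are `-1/2` (`F`), `1` (`G`), `-2` (`FGF`) and the roots of `s² + s + 1` (`FG`, `GF`),
which exist since `3 ∣ p - 1`; they form the orbits `{1, -2, -1/2}` and `{ω, ω²}`, and
`p - 2 = 3 + 2 + 6k` counts the rest.
-/

open MulAction Subgroup

section Braid

variable {G : Type*} [Group G] {f g : G}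

theorem coe_closure_pair_eq_of_braid (hf : f * f = 1) (hg : g * g = 1)
    (hfg : f * g * f = g * f * g) :
    (closure {f, g} : Set G) = {1, f, g, f * g, g * f, f * g * f} := by
  set T : Set G := {1, f, g, f * g, g * f, f * g * f}
  have hmul : ∀ x ∈ ({f, g} : Set G), ∀ y ∈ T, x * y ∈ T := by
    rintro x (rfl | rfl) y (rfl | rfl | rfl | rfl | rfl | rfl) <;>
      first
      | (simp [T, ← mul_assoc, hf, hg]; done)
      | (rw [← mul_assoc, ← hfg]; simp [T])
      | (rw [hfg]; simp [T, ← mul_assoc, hg])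
  refine subset_antisymm (fun x hx => ?_) ?_
  · induction hx using closure_induction_left with
    | one => simp [T]
    | mul_left x hx y _ hy => exact hmul x hx y hy
    | inv_mul_cancel x hx y _ hy =>
      rcases hx with rfl | rfl
      · rw [inv_eq_of_mul_eq_one_right hf]; exact hmul _ (by simp) y hy
      · rw [inv_eq_of_mul_eq_one_right hg]; exact hmul _ (by simp) y hy
  · have hfc : f ∈ closure {f, g} := subset_closure (by simp)
    have hgc : g ∈ closure {f, g} := subset_closure (by simp)
    simp only [T, Set.insert_subset_iff, Set.singleton_subset_iff, SetLike.mem_coe]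
    exact ⟨one_mem _, hfc, hgc, mul_mem hfc hgc, mul_mem hgc hfc,
      mul_mem (mul_mem hfc hgc) hfc⟩

theorem pow_three_mul_eq_one_of_braid (hf : f * f = 1) (hg : g * g = 1)
    (hfg : f * g * f = g * f * g) : (f * g) ^ 3 = 1 := by
  calc (f * g) ^ 3 = f * g * f * (g * f * g) := by
        simp only [pow_succ, pow_zero, one_mul, mul_assoc]
    _ = f * g * (f * f) * g * f := by rw [← hfg]; group
    _ = 1 := by rw [hf, mul_one, mul_assoc f g g, hg, mul_one, hf]

theorem natCard_closure_pair_eq_six_of_braid (hf : f * f = 1) (hg : g * g = 1)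
    (hfg : f * g * f = g * f * g) (hf1 : f ≠ 1) (hfg1 : f * g ≠ 1) :
    Nat.card (closure {f, g}) = 6 := by
  classical
  have hT := coe_closure_pair_eq_of_braid hf hg hfg
  have hle : Nat.card (closure {f, g}) ≤ 6 := by
    rw [← SetLike.coe_sort_coe, Nat.card_coe_set_eq, hT]
    have := Set.ncard_coe_finset ({1, f, g, f * g, g * f, f * g * f} : Finset G)
    push_cast at this
    exact this.trans_le Finset.card_le_six
  have : Finite (closure {f, g}) := by
    rw [← SetLike.coe_sort_coe, hT]; exact Set.toFinite _
  have hfc : f ∈ closure {f, g} := subset_closure (by simp)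
  have hgc : g ∈ closure {f, g} := subset_closure (by simp)
  have h2 : 2 ∣ Nat.card (closure {f, g}) := by
    have := orderOf_dvd_natCard (⟨f, hfc⟩ : closure {f, g})
    rwa [orderOf_mk, orderOf_eq_prime (pow_two f ▸ hf) hf1] at this
  have h3 : 3 ∣ Nat.card (closure {f, g}) := by
    have := orderOf_dvd_natCard (⟨f * g, mul_mem hfc hgc⟩ : closure {f, g})
    rwa [orderOf_mk, orderOf_eq_prime (pow_three_mul_eq_one_of_braid hf hg hfg) hfg1] at this
  have hpos : 0 < Nat.card (closure {f, g}) := Nat.card_pos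
  omega

end Braid

section PermBraid

variable {α : Type*} {f g : Equiv.Perm α}

theorem orbit_closure_pair_eq_of_braid (hf : f * f = 1) (hg : g * g = 1)
    (hfg : f * g * f = g * f * g) (s : α) :
    orbit (closure {f, g}) s = {s, f s, g s, f (g s), g (f s), f (g (f s))} := by
  have himage : orbit (closure {f, g}) s = (· s) '' (closure {f, g} : Set (Equiv.Perm α)) := by
    ext x; simp [mem_orbit_iff, Subgroup.smul_def]
  simp [himage, coe_closure_pair_eq_of_braid hf hg hfg, Set.image_insert_eq]

theorem natCard_orbit_closure_pair_eq_six_of_braid (hf : f * f = 1) (hg : g * g = 1)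
    (hfg : f * g * f = g * f * g) {s : α} (hfs : f s ≠ s) (hgs : g s ≠ s)
    (hfgs : f (g s) ≠ s) (hgfs : g (f s) ≠ s) (hfgfs : f (g (f s)) ≠ s) :
    Nat.card (orbit (closure {f, g}) s) = 6 := by
  have hstab : stabilizer (closure {f, g}) s = ⊥ := by
    refine (Subgroup.eq_bot_iff_forall _).2 fun ⟨h, hh⟩ hfix => Subtype.ext ?_
    rw [mem_stabilizer_iff, Subgroup.mk_smul, Equiv.Perm.smul_def] at hfix
    rw [← SetLike.mem_coe, coe_closure_pair_eq_of_braid hf hg hfg] at hh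
    rcases hh with rfl | rfl | rfl | rfl | rfl | rfl
    exacts [rfl, absurd hfix hfs, absurd hfix hgs, absurd hfix hfgs, absurd hfix hgfs,
      absurd hfix hfgfs]
  rw [Nat.card_coe_set_eq, ← index_stabilizer, hstab, index_bot]
  exact natCard_closure_pair_eq_six_of_braid hf hg hfg (fun h => hfs (by rw [h]; rfl))
    (fun h => hfgs (by rw [← Equiv.Perm.mul_apply, h]; rfl))

end PermBraid

theorem natCard_orbitRel_quotient_of_two_exceptional_orbits {G α : Type*} [Group G]
    [MulAction G α] [Finite α] {k : ℕ} {a b : α}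
    (hab : Nat.card (orbit G a) ≠ Nat.card (orbit G b))
    (ha : Nat.card (orbit G a) ≠ k) (hb : Nat.card (orbit G b) ≠ k)
    (hk : ∀ x, x ∉ orbit G a → x ∉ orbit G b → Nat.card (orbit G x) = k) :
    Nat.card α = Nat.card (orbit G a) + Nat.card (orbit G b) +
        k * Nat.card {ω : orbitRel.Quotient G α // Nat.card ω.orbit = k} ∧
      Nat.card (orbitRel.Quotient G α) =
        Nat.card {ω : orbitRel.Quotient G α // Nat.card ω.orbit = k} + 2 := by
  classical
  have := Fintype.ofFinite (orbitRel.Quotient G α)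
  set A : Finset (orbitRel.Quotient G α) := {Quotient.mk'' a, Quotient.mk'' b}
  have hne : (Quotient.mk'' a : orbitRel.Quotient G α) ≠ Quotient.mk'' b :=
    fun h => hab (by rw [← orbitRel.Quotient.orbit_mk, h, orbitRel.Quotient.orbit_mk])
  have hA : ∀ ω : orbitRel.Quotient G α, Nat.card ω.orbit = k ↔ ω ∉ A := by
    refine Quotient.ind fun x => ?_
    simp only [A, Finset.mem_insert, Finset.mem_singleton, not_or]
    rw [← orbitRel.Quotient.mem_orbit, ← orbitRel.Quotient.mem_orbit]
    simp only [orbitRel.Quotient.orbit_mk]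
    refine ⟨fun hx => ⟨fun h => ha ?_, fun h => hb ?_⟩, fun hx => hk x hx.1 hx.2⟩
    · rwa [← orbit_eq_iff.mpr h]
    · rwa [← orbit_eq_iff.mpr h]
  have hcard :
      Nat.card {ω : orbitRel.Quotient G α // Nat.card ω.orbit = k} = (Finset.univ \ A).card := by
    rw [Nat.card_eq_fintype_card, Fintype.card_subtype]
    congr 1; ext ω
    simp only [Finset.mem_filter, Finset.mem_sdiff, Finset.mem_univ, true_and, hA]
  have hsum : Nat.card α = ∑ ω : orbitRel.Quotient G α, Nat.card ω.orbit := by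
    rw [Nat.card_congr (selfEquivSigmaOrbits' G α), Nat.card_sigma]
  rw [hcard]
  constructor
  · rw [hsum, ← Finset.sum_sdiff (Finset.subset_univ A), Finset.sum_pair hne,
      Finset.sum_const_nat fun ω hω => (hA ω).mpr (Finset.mem_sdiff.mp hω).2]
    simp only [orbitRel.Quotient.orbit_mk]
    ring
  · rw [Nat.card_eq_fintype_card, ← Finset.card_univ, ← Finset.card_pair hne,
      Finset.card_sdiff_add_card_eq_card (Finset.subset_univ A)]

theorem natCard_subtype_ne_zero_ne_neg_one (K : Type*) [Field K] [Finite K] :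
    Nat.card {x : K // x ≠ 0 ∧ x ≠ -1} = Nat.card K - 2 := by
  rw [← Set.ncard_pair (neg_ne_zero.mpr (one_ne_zero (α := K))).symm, ← Set.ncard_compl,
    ← Nat.card_coe_set_eq]
  exact Nat.card_congr (Equiv.subtypeEquivRight fun x => by simp)

theorem exists_sq_add_self_add_one_eq_zero {K : Type*} [Field K] [Fintype K]
    (h : 3 ∣ Fintype.card K - 1) : ∃ ω : K, ω ^ 2 + ω + 1 = 0 := by
  classical
  obtain ⟨u, hu⟩ := exists_prime_orderOf_dvd_card (G := Kˣ) 3 (by rwa [Fintype.card_units])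
  have hu3 : (u : K) ^ 3 = 1 := by
    rw [← Units.val_pow_eq_pow_val, ← hu, pow_orderOf_eq_one, Units.val_one]
  have hu1 : (u : K) ≠ 1 := fun h1 => by
    rw [Units.val_eq_one.mp h1, orderOf_one] at hu; omega
  refine ⟨u, (mul_eq_zero.mp ?_).resolve_left (sub_ne_zero.mpr hu1)⟩
  linear_combination hu3

section PuncturedField

local notation "𝕊" K => {x : K // x ≠ 0 ∧ x ≠ -1}

variable {K : Type*} [Field K] {f g : Equiv.Perm (𝕊 K)}

theorem mul_self_eq_one_of_coe_eq_neg_one_sub (hf : ∀ s, (f s : K) = -1 - s) : f * f = 1 :=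
  Equiv.ext fun s => Subtype.ext (by simp [hf])

theorem mul_self_eq_one_of_coe_eq_inv (hg : ∀ s, (g s : K) = (s : K)⁻¹) : g * g = 1 :=
  Equiv.ext fun s => Subtype.ext (by simp [hg])

theorem braid_of_coe_eq_neg_one_sub_of_coe_eq_inv (hf : ∀ s, (f s : K) = -1 - s)
    (hg : ∀ s, (g s : K) = (s : K)⁻¹) : f * g * f = g * f * g := by
  refine Equiv.ext fun s => Subtype.ext ?_
  obtain ⟨hs0, hs1⟩ := s.2
  have hs1' : -1 - (s : K) ≠ 0 := fun h => hs1 (by linear_combination -h)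
  simp only [Equiv.Perm.mul_apply, hf, hg]
  apply eq_inv_of_mul_eq_one_left
  field_simp
  ring

theorem orbit_of_coe_eq_one (hf : ∀ s, (f s : K) = -1 - s) (hg : ∀ s, (g s : K) = (s : K)⁻¹)
    (h3 : (3 : K) ≠ 0) (s : 𝕊 K) (hs : (s : K) = 1) :
    orbit (closure {f, g}) s = {x : 𝕊 K | (x : K) = 1 ∨ (x : K) = -2⁻¹ ∨ (x : K) = -2} ∧
      Nat.card (orbit (closure {f, g}) s) = 3 := by
  have hff := mul_self_eq_one_of_coe_eq_neg_one_sub hf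
  have hgg := mul_self_eq_one_of_coe_eq_inv hg
  have hfg := braid_of_coe_eq_neg_one_sub_of_coe_eq_inv hf hg
  have h2 : (2 : K) ≠ 0 := fun h => s.2.2 (by linear_combination hs + h)
  have hgs : g s = s := Subtype.ext (by rw [hg, hs, inv_one])
  have hfgfs : f (g (f s)) = g (f s) := by
    rw [show f (g (f s)) = g (f (g s)) from DFunLike.congr_fun hfg s, hgs]
  have hfs : (f s : K) = -2 := by rw [hf, hs]; norm_num
  have hgfs : (g (f s) : K) = -2⁻¹ := by rw [hg, hfs, inv_neg]
  have hE : orbit (closure {f, g}) s = {s, f s, g (f s)} := by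
    rw [orbit_closure_pair_eq_of_braid hff hgg hfg, hgs, hfgfs]
    ext x; simp only [Set.mem_insert_iff, Set.mem_singleton_iff]; tauto
  have h2inv : (2 : K) * 2⁻¹ = 1 := mul_inv_cancel₀ h2
  refine ⟨?_, ?_⟩
  · rw [hE]; ext x
    simp only [Set.mem_insert_iff, Set.mem_singleton_iff, Set.mem_ofPred_eq, Subtype.ext_iff,
      hs, hfs, hgfs]
    tauto
  · rw [hE, Nat.card_coe_set_eq, Set.ncard_eq_three]
    refine ⟨s, f s, g (f s), ?_, ?_, ?_, rfl⟩ <;>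
      simp only [Ne, Subtype.ext_iff, hs, hfs, hgfs] <;>
      intro h <;> apply h3
    · linear_combination h
    · linear_combination 2 * h - h2inv
    · linear_combination -2 * h + h2inv

theorem orbit_of_sq_add_self_add_one_eq_zero (hf : ∀ s, (f s : K) = -1 - s)
    (hg : ∀ s, (g s : K) = (s : K)⁻¹) (h3 : (3 : K) ≠ 0) (s : 𝕊 K)
    (hs : (s : K) ^ 2 + s + 1 = 0) :
    orbit (closure {f, g}) s = {x : 𝕊 K | (x : K) ^ 2 + x + 1 = 0} ∧
      Nat.card (orbit (closure {f, g}) s) = 2 := by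
  have hff := mul_self_eq_one_of_coe_eq_neg_one_sub hf
  have hgg := mul_self_eq_one_of_coe_eq_inv hg
  have hgs : g s = f s :=
    Subtype.ext (by rw [hg, hf]; exact inv_eq_of_mul_eq_one_right (by linear_combination -hs))
  have hffs : f (f s) = s := DFunLike.congr_fun hff s
  have hgfs : g (f s) = s := by rw [← hgs]; exact DFunLike.congr_fun hgg s
  have hE : orbit (closure {f, g}) s = {s, f s} := by
    rw [orbit_closure_pair_eq_of_braid hff hgg (braid_of_coe_eq_neg_one_sub_of_coe_eq_inv hf hg),
      hgs, hffs, hgfs]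
    ext x; simp only [Set.mem_insert_iff, Set.mem_singleton_iff]; tauto
  refine ⟨?_, ?_⟩
  · rw [hE]; ext x
    simp only [Set.mem_insert_iff, Set.mem_singleton_iff, Set.mem_ofPred_eq, Subtype.ext_iff, hf]
    constructor
    · rintro (hx | hx) <;> rw [hx]
      · exact hs
      · linear_combination hs
    · intro hx
      have hroots : ((x : K) - s) * ((x : K) - (-1 - s)) = 0 := by linear_combination hx - hs
      rcases mul_eq_zero.mp hroots with h | h
      · exact Or.inl (by linear_combination h)
      · exact Or.inr (by linear_combination h)
  · rw [hE, Nat.card_coe_set_eq, Set.ncard_pair]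
    rw [Ne, Subtype.ext_iff, hf]
    intro h
    exact h3 (by linear_combination 4 * hs - (2 * (s : K) + 1) * h)

theorem natCard_orbit_eq_six (hf : ∀ s, (f s : K) = -1 - s) (hg : ∀ s, (g s : K) = (s : K)⁻¹)
    {s : 𝕊 K} (hs1 : (s : K) ≠ 1) (hs2 : (s : K) ≠ -2) (hhalf : 2 * (s : K) + 1 ≠ 0)
    (hq : (s : K) ^ 2 + s + 1 ≠ 0) :
    Nat.card (orbit (closure {f, g}) s) = 6 := by
  obtain ⟨hs0, hsneg⟩ := s.2
  have hinv : (s : K) * (s : K)⁻¹ = 1 := mul_inv_cancel₀ hs0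
  have hinv' : (-1 - (s : K)) * (-1 - (s : K))⁻¹ = 1 :=
    mul_inv_cancel₀ fun h => hsneg (by linear_combination -h)
  refine natCard_orbit_closure_pair_eq_six_of_braid (mul_self_eq_one_of_coe_eq_neg_one_sub hf)
    (mul_self_eq_one_of_coe_eq_inv hg) (braid_of_coe_eq_neg_one_sub_of_coe_eq_inv hf hg)
    ?_ ?_ ?_ ?_ ?_ <;> simp only [Ne, Subtype.ext_iff, hf, hg] <;> intro h
  · exact hhalf (by linear_combination -h)
  · have hsq : ((s : K) - 1) * ((s : K) + 1) = 0 := by linear_combination -(s : K) * h + hinv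
    rcases mul_eq_zero.mp hsq with h' | h'
    · exact hs1 (by linear_combination h')
    · exact hsneg (by linear_combination h')
  · exact hq (by linear_combination -(s : K) * h - hinv)
  · exact hq (by linear_combination (-1 - (s : K)) * h - hinv')
  · have hsq : (s : K) * ((s : K) + 2) = 0 := by linear_combination (-1 - (s : K)) * h + hinv'
    rcases mul_eq_zero.mp hsq with h' | h'
    · exact hs0 h'
    · exact hs2 (by linear_combination h')

end PuncturedField

theorem orbit_count_one_mod_three_general (p : ℕ) [Fact p.Prime]
    (h3 : p % 3 = 1)
    (f g : Equiv.Perm {x : ZMod p // x ≠ 0 ∧ x ≠ -1})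
    (hf : ∀ s, ((f s : ZMod p)) = -1 - (s : ZMod p))
    (hg : ∀ s, ((g s : ZMod p)) = (s : ZMod p)⁻¹)
    (H : Subgroup (Equiv.Perm {x : ZMod p // x ≠ 0 ∧ x ≠ -1}))
    (hH : H = Subgroup.closure {f, g}) :
    Nat.card (MulAction.orbitRel.Quotient H {x : ZMod p // x ≠ 0 ∧ x ≠ -1}) = (p + 5) / 6 ∧
    (∀ s : {x : ZMod p // x ≠ 0 ∧ x ≠ -1}, (s : ZMod p) = 1 →
      MulAction.orbit H s =
        {x : {x : ZMod p // x ≠ 0 ∧ x ≠ -1} |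
          (x : ZMod p) = 1 ∨ (x : ZMod p) = -2⁻¹ ∨ (x : ZMod p) = -2} ∧
      Nat.card (MulAction.orbit H s) = 3) ∧
    (∀ s : {x : ZMod p // x ≠ 0 ∧ x ≠ -1}, (s : ZMod p) ^ 2 + (s : ZMod p) + 1 = 0 →
      MulAction.orbit H s =
        {x : {x : ZMod p // x ≠ 0 ∧ x ≠ -1} | (x : ZMod p) ^ 2 + (x : ZMod p) + 1 = 0} ∧
      Nat.card (MulAction.orbit H s) = 2) ∧
    Nat.card {o : MulAction.orbitRel.Quotient H {x : ZMod p // x ≠ 0 ∧ x ≠ -1} //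
      Nat.card o.orbit = 6} = (p - 7) / 6 := by
  subst hH
  have hp2 := (Fact.out : p.Prime).two_le
  have hcast (n : ℕ) (hn : 0 < n) (hnp : n < p) : (n : ZMod p) ≠ 0 := fun h =>
    absurd (Nat.le_of_dvd hn ((ZMod.natCast_eq_zero_iff n p).mp h)) (by omega)
  have h2 : (2 : ZMod p) ≠ 0 := by exact_mod_cast hcast 2 (by norm_num) (by omega)
  have h3p : (3 : ZMod p) ≠ 0 := by exact_mod_cast hcast 3 (by norm_num) (by omega)
  have orbit_one := orbit_of_coe_eq_one hf hg h3p
  have orbit_root := orbit_of_sq_add_self_add_one_eq_zero hf hg h3p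
  obtain ⟨ω, hω⟩ :=
    exists_sq_add_self_add_one_eq_zero (K := ZMod p) (by rw [ZMod.card]; omega)
  let one : {x : ZMod p // x ≠ 0 ∧ x ≠ -1} :=
    ⟨1, one_ne_zero, fun h => h2 (by linear_combination h)⟩
  let root : {x : ZMod p // x ≠ 0 ∧ x ≠ -1} :=
    ⟨ω, fun h => by simp [h] at hω, fun h => by simp [h] at hω⟩
  obtain ⟨-, hcard_one⟩ := orbit_one one rfl
  obtain ⟨-, hcard_root⟩ := orbit_root root hω
  obtain ⟨hcard, hcard_quot⟩ :=
    natCard_orbitRel_quotient_of_two_exceptional_orbits (k := 6) (a := one) (b := root)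
    (by rw [hcard_one, hcard_root]; decide) (by rw [hcard_one]; decide) (by rw [hcard_root]; decide)
    fun x hx_one hx_root => by
      rw [(orbit_one _ rfl).1] at hx_one
      rw [(orbit_root _ hω).1] at hx_root
      simp only [Set.mem_ofPred_eq, not_or] at hx_one hx_root
      exact natCard_orbit_eq_six hf hg hx_one.1 hx_one.2.2 (fun h => hx_one.2.1
        (by linear_combination 2⁻¹ * h - (x : ZMod p) * mul_inv_cancel₀ h2)) hx_root
  rw [natCard_subtype_ne_zero_ne_neg_one, Nat.card_zmod, hcard_one, hcard_root] at hcard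
  exact ⟨by omega, orbit_one, orbit_root, by omega⟩

theorem orbit_count_one_mod_three (p : ℕ) [Fact p.Prime] (hp11 : 11 ≤ p)
    (h3 : p % 3 = 1)
    (f g : Equiv.Perm {x : ZMod p // x ≠ 0 ∧ x ≠ -1})
    (hf : ∀ s, ((f s : ZMod p)) = -1 - (s : ZMod p))
    (hg : ∀ s, ((g s : ZMod p)) = (s : ZMod p)⁻¹)
    (H : Subgroup (Equiv.Perm {x : ZMod p // x ≠ 0 ∧ x ≠ -1}))
    (hH : H = Subgroup.closure {f, g}) :
    Nat.card (MulAction.orbitRel.Quotient H {x : ZMod p // x ≠ 0 ∧ x ≠ -1}) = (p + 5) / 6 ∧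
    (∀ s : {x : ZMod p // x ≠ 0 ∧ x ≠ -1}, (s : ZMod p) = 1 →
      MulAction.orbit H s =
        {x : {x : ZMod p // x ≠ 0 ∧ x ≠ -1} |
          (x : ZMod p) = 1 ∨ (x : ZMod p) = -2⁻¹ ∨ (x : ZMod p) = -2} ∧
      Nat.card (MulAction.orbit H s) = 3) ∧
    (∀ s : {x : ZMod p // x ≠ 0 ∧ x ≠ -1}, (s : ZMod p) ^ 2 + (s : ZMod p) + 1 = 0 →
      MulAction.orbit H s =
        {x : {x : ZMod p // x ≠ 0 ∧ x ≠ -1} | (x : ZMod p) ^ 2 + (x : ZMod p) + 1 = 0} ∧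
      Nat.card (MulAction.orbit H s) = 2) ∧
    Nat.card {o : MulAction.orbitRel.Quotient H {x : ZMod p // x ≠ 0 ∧ x ≠ -1} //
      Nat.card o.orbit = 6} = (p - 7) / 6 :=
  orbit_count_one_mod_three_general p h3 f g hf hg H hH
end

section
/- For a prime p, s·q_p(s) - (s+1)·q_p(s+1) ≡ f(s+1) (mod p) for 1 ≤ s ≤ p-2, where f(u) = Σ_{j=1}^{p-1} u^j / j computed in Z/pZ (with 1/j the inverse of j mod p). -/
/-- `f(u) = ∑_{j=1}^{p-1} u^j / j` computed in `ZMod p`. -/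
def fsum (p : ℕ) (u : ZMod p) : ZMod p :=
  ∑ j ∈ Finset.Icc 1 (p - 1), u ^ j * (j : ZMod p)⁻¹

/-!
Write `u^(p-1) = 1 + p q(u)`; multiplying by `u` gives `u^p - u ≡ p u q(u) (mod p²)`.
Hence, with `x = s + 1`, `p (s q(s) - x q(x)) ≡ (x - 1)^p - x^p + 1 (mod p²)`, and for odd `p`
the binomial theorem gives `(x - 1)^p - x^p + 1 = ∑_{0<j<p} (-1)^(j+1) C(p,j) x^j`. Each `C(p,j)`
is divisible by `p`, and `C(p,j)/p = C(p-1,j-1)/j ≡ (-1)^(j-1)/j (mod p)`; cancelling `p` leaves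
`∑ x^j / j = f(x)`.
-/

open Finset

theorem Nat.Prime.cast_choose_pred {p : ℕ} (hp : p.Prime) {k : ℕ} (hk : k < p) :
    ((p - 1).choose k : ZMod p) = (-1) ^ k := by
  induction k with
  | zero => simp
  | succ k ih =>
    have hpascal : p.choose (k + 1) = (p - 1).choose k + (p - 1).choose (k + 1) := by
      rw [← Nat.choose_succ_succ', Nat.sub_add_cancel hp.one_le]
    have hzero : (p.choose (k + 1) : ZMod p) = 0 :=
      (ZMod.natCast_eq_zero_iff _ _).2 (hp.dvd_choose_self k.succ_ne_zero hk)
    rw [hpascal, Nat.cast_add, ih (by omega)] at hzero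
    rw [pow_succ]
    linear_combination hzero

theorem Nat.Prime.cast_choose_div_self {p : ℕ} (hp : p.Prime) {j : ℕ} (hj : 0 < j) (hjp : j < p) :
    ((p.choose j / p : ℕ) : ZMod p) = (-1) ^ (j + 1) * (j : ZMod p)⁻¹ := by
  have : Fact p.Prime := ⟨hp⟩
  have hj0 : (j : ZMod p) ≠ 0 := by
    rw [Ne, ZMod.natCast_eq_zero_iff]
    exact fun h => absurd (Nat.le_of_dvd hj h) (by omega)
  have hmul : (p - 1).choose (j - 1) = p.choose j / p * j := by
    have hsucc := Nat.add_one_mul_choose_eq (p - 1) (j - 1)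
    rw [Nat.sub_add_cancel hp.one_le, Nat.sub_add_cancel hj] at hsucc
    rw [Nat.div_mul_right_comm (hp.dvd_choose_self hj.ne' hjp), ← hsucc,
      Nat.mul_div_cancel_left _ hp.pos]
  have hcast := congrArg (Nat.cast : ℕ → ZMod p) hmul
  rw [hp.cast_choose_pred (by omega), Nat.cast_mul] at hcast
  rw [eq_mul_inv_iff_mul_eq₀ hj0, ← hcast, show j + 1 = j - 1 + 2 by omega, pow_add]
  simp

theorem sub_one_pow_sub_pow_add_one_of_odd {R : Type*} [CommRing R] {n : ℕ} (hn : Odd n) (x : R) :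
    (x - 1) ^ n - x ^ n + 1 = ∑ j ∈ Icc 1 (n - 1), (-1) ^ (j + 1) * (n.choose j : R) * x ^ j := by
  have hreflect : (x - 1) ^ n = ∑ j ∈ range (n + 1), (-1) ^ (j + 1) * (n.choose j : R) * x ^ j := by
    rw [← neg_sub, hn.neg_pow, sub_eq_neg_add, add_pow, ← sum_neg_distrib]
    refine sum_congr rfl fun j _ => ?_
    rw [neg_pow, one_pow, mul_one, pow_succ]
    ring
  obtain ⟨m, rfl⟩ := hn
  rw [hreflect, sum_range_succ, sum_range_succ', Nat.add_sub_cancel, ← Ico_add_one_right_eq_Icc,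
    sum_Ico_eq_sum_range, Nat.add_sub_cancel]
  simp [add_comm 1, pow_succ, pow_mul]

theorem Nat.Prime.sub_one_pow_sub_pow_add_one {R : Type*} [CommRing R] {p : ℕ} (hp : p.Prime)
    (hp2 : p ≠ 2) (x : R) :
    (x - 1) ^ p - x ^ p + 1 =
      p * ∑ j ∈ Icc 1 (p - 1), (-1) ^ (j + 1) * ((p.choose j / p : ℕ) : R) * x ^ j := by
  rw [sub_one_pow_sub_pow_add_one_of_odd (hp.odd_of_ne_two hp2), mul_sum]
  refine sum_congr rfl fun j hj => ?_
  obtain ⟨hj1, hjp⟩ := mem_Icc.1 hj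
  rw [← Nat.mul_div_cancel' (hp.dvd_choose_self (k := j) (by omega) (by omega)), Nat.cast_mul,
    Nat.mul_div_cancel_left _ hp.pos]
  ring

theorem pow_sub_self_modEq_mul_fermatQuotient {p : ℕ} (hp : p.Prime) {u : ℤ}
    (hu : IsCoprime u p) : u ^ p - u ≡ p * (u * fermatQuotient p u) [ZMOD p * p] := by
  have hq : (p : ℤ) * fermatQuotient p u ≡ u ^ (p - 1) - 1 [ZMOD p * p] := by
    rw [← Int.mul_ediv_cancel' (Int.prime_dvd_pow_sub_one hp hu)]
    exact (Int.mod_modEq _ _).mul_left'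
  have hpow : u ^ p - u = u * (u ^ (p - 1) - 1) := by
    rw [mul_sub, ← pow_succ', Nat.sub_add_cancel hp.one_le, mul_one]
  rw [hpow, mul_left_comm]
  exact (hq.mul_left u).symm

theorem fermatQuotient_eq_fsum (p : ℕ) (hp : p.Prime) (s : ℕ)
    (h1 : 1 ≤ s) (h2 : s ≤ p - 2) :
    (((s : ℤ) * fermatQuotient p s - ((s : ℤ) + 1) * fermatQuotient p ((s : ℤ) + 1) : ℤ) :
      ZMod p) = fsum p ((s : ZMod p) + 1) := by
  have coprime {n : ℕ} (hn : 0 < n) (hnp : n < p) : IsCoprime (n : ℤ) p :=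
    Nat.isCoprime_iff_coprime.2 ((hp.coprime_iff_not_dvd.2 (Nat.not_dvd_of_pos_of_lt hn hnp)).symm)
  have hs := pow_sub_self_modEq_mul_fermatQuotient hp (coprime h1 (by omega))
  have hs1 := pow_sub_self_modEq_mul_fermatQuotient hp (u := s + 1)
    (mod_cast coprime (n := s + 1) (by omega) (by omega))
  set M : ℤ := ∑ j ∈ Icc 1 (p - 1), (-1) ^ (j + 1) * ((p.choose j / p : ℕ) : ℤ) * (s + 1) ^ j
  have hM : (s : ℤ) ^ p - s - (((s : ℤ) + 1) ^ p - (s + 1)) = p * M := by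
    rw [← hp.sub_one_pow_sub_pow_add_one (by omega)]
    ring
  have key : (p : ℤ) * (s * fermatQuotient p s - (s + 1) * fermatQuotient p (s + 1)) ≡ p * M
      [ZMOD p * p] := by
    rw [← hM, mul_sub]
    exact (hs.sub hs1).symm
  rw [(ZMod.intCast_eq_intCast_iff _ _ _).2 (key.mul_left_cancel' (mod_cast hp.ne_zero))]
  simp only [M, fsum, Int.cast_sum, Int.cast_mul, Int.cast_pow, Int.cast_neg, Int.cast_one,
    Int.cast_add, Int.cast_natCast]
  refine sum_congr rfl fun j hj => ?_
  obtain ⟨hj1, hjp⟩ := mem_Icc.1 hj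
  rw [hp.cast_choose_div_self (by omega) (by omega), ← mul_assoc, ← mul_pow, neg_one_mul,
    neg_neg, one_pow, one_mul, mul_comm]
end

section
/- Let p ≥ 5 be prime with p ≡ 1 (mod 3) and let s ∈ {1,...,p-2} be a root of s² + s + 1 ≡ 0 (mod p). Then θ_{p,s} = 0, where θ_{p,s} is the Legendre symbol of 2s(s+1)(s·q_p(s) - (s+1)·q_p(s+1)) mod p. Consequently N_0(p) ≥ 2 for p ≡ 1 (mod 3), where N_0(p) = #{s ∈ {1,...,p-2} : θ_{p,s} = 0}. -/
/-!
The Fermat quotient behaves like a logarithm: `q(ab) ≡ q(a) + q(b)`, `q(-a) = q(a)`, and, from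
`(u + pt)^(p-1) ≡ u^(p-1) - pt·u^(p-2) (mod p²)`, `u·q(u + pt) ≡ u·q(u) - t (mod p)`.
If `n² + n + 1 = pk`, then `n³ = 1 + pk(n - 1)` and `n + 1 = -n² + pk`, so
`3q(n) ≡ -k(n - 1)` and `n²q(n + 1) ≡ 2n²q(n) + k`; together with `n³ ≡ 1` these give
`3(n q(n) - (n + 1) q(n + 1)) ≡ 0`. The two primitive cube roots of unity mod `p` are two
such `s`.
-/

namespace ZMod

variable {n : ℕ}

lemma natCast_self_sq_eq_zero : (n : ZMod (n ^ 2)) ^ 2 = 0 := by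
  exact_mod_cast ZMod.natCast_self (n ^ 2)

lemma natCast_mul_intCast_eq_zero_iff [NeZero n] (x : ℤ) :
    (n : ZMod (n ^ 2)) * x = 0 ↔ (x : ZMod n) = 0 := by
  have hn : (n : ℤ) ≠ 0 := by exact_mod_cast NeZero.ne n
  rw [← Int.cast_natCast, ← Int.cast_mul, ZMod.intCast_zmod_eq_zero_iff_dvd,
    ZMod.intCast_zmod_eq_zero_iff_dvd, Nat.cast_pow, pow_two, mul_dvd_mul_iff_left hn]

lemma val_mem_Icc_of_sq_add_add_one_eq_zero [Fact (1 < n)] {x : ZMod n}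
    (hx : x ^ 2 + x + 1 = 0) : x.val ∈ Finset.Icc 1 (n - 2) := by
  have hx0 : x ≠ 0 := by rintro rfl; simp at hx
  have hx1 : x ≠ -1 := by rintro rfl; norm_num at hx
  have hval : x.val ≠ n - 1 := fun h ↦ hx1 <| by
    rw [← ZMod.natCast_zmod_val x, h, Nat.cast_sub NeZero.one_le, ZMod.natCast_self]
    simp
  have := ZMod.val_lt x
  have := (ZMod.val_ne_zero x).2 hx0
  rw [Finset.mem_Icc]
  omega

end ZMod

lemma IsPrimitiveRoot.sq_add_self_add_one {R : Type*} [CommRing R] [IsDomain R] {ζ : R}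
    (hζ : IsPrimitiveRoot ζ 3) : ζ ^ 2 + ζ + 1 = 0 := by
  have h := hζ.geom_sum_eq_zero (by norm_num)
  simp only [Finset.sum_range_succ, Finset.sum_range_zero, pow_zero, pow_one] at h
  linear_combination h

namespace fermatQuotient

@[simp]
lemma one (p : ℕ) : fermatQuotient p 1 = 0 := by simp [fermatQuotient]

variable {p : ℕ} [hp : Fact p.Prime]

lemma pow_sub_one_eq {u : ℤ} (hu : (u : ZMod p) ≠ 0) :
    (u : ZMod (p ^ 2)) ^ (p - 1) = 1 + p * fermatQuotient p u := by
  obtain ⟨a, ha⟩ : (p : ℤ) ∣ u ^ (p - 1) - 1 := by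
    rw [← ZMod.intCast_zmod_eq_zero_iff_dvd]
    push_cast
    rw [ZMod.pow_card_sub_one_eq_one hu, sub_self]
  have hq : fermatQuotient p u = a % p := by
    rw [fermatQuotient, ha, Int.mul_ediv_cancel_left _ (by exact_mod_cast hp.out.ne_zero)]
  have hmod : (p : ZMod (p ^ 2)) * ((a - a % p : ℤ) : ZMod (p ^ 2)) = 0 := by
    rw [ZMod.natCast_mul_intCast_eq_zero_iff, Int.cast_sub, ZMod.intCast_mod, sub_self]
  rw [hq, ← Int.cast_pow, show u ^ (p - 1) = 1 + p * a by linear_combination ha]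
  push_cast at hmod ⊢
  linear_combination hmod

lemma intCast_eq_iff {u : ℤ} (hu : (u : ZMod p) ≠ 0) (c : ℤ) :
    (fermatQuotient p u : ZMod p) = c ↔ (u : ZMod (p ^ 2)) ^ (p - 1) = 1 + p * c := by
  rw [pow_sub_one_eq hu, add_right_inj, ← sub_eq_zero (a := (p : ZMod (p ^ 2)) * _), ← mul_sub,
    ← Int.cast_sub, ZMod.natCast_mul_intCast_eq_zero_iff, Int.cast_sub, sub_eq_zero]

lemma mul {a b : ℤ} (ha : (a : ZMod p) ≠ 0) (hb : (b : ZMod p) ≠ 0) :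
    (fermatQuotient p (a * b) : ZMod p) = fermatQuotient p a + fermatQuotient p b := by
  have hab : ((a * b : ℤ) : ZMod p) ≠ 0 := by push_cast; exact mul_ne_zero ha hb
  rw [← Int.cast_add, intCast_eq_iff hab, Int.cast_mul, mul_pow, pow_sub_one_eq ha,
    pow_sub_one_eq hb]
  push_cast
  linear_combination (fermatQuotient p a * fermatQuotient p b : ZMod (p ^ 2)) *
    ZMod.natCast_self_sq_eq_zero

lemma pow {a : ℤ} (ha : (a : ZMod p) ≠ 0) (m : ℕ) :
    (fermatQuotient p (a ^ m) : ZMod p) = m * fermatQuotient p a := by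
  induction m with
  | zero => simp
  | succ m ih =>
    rw [pow_succ, mul (by push_cast; exact pow_ne_zero m ha) ha, ih]
    push_cast
    ring

lemma neg (hp2 : p ≠ 2) (u : ℤ) : fermatQuotient p (-u) = fermatQuotient p u := by
  rw [fermatQuotient, (hp.out.even_sub_one hp2).neg_pow, fermatQuotient]

lemma mul_add_natCast_mul {u : ℤ} (hu : (u : ZMod p) ≠ 0) (t : ℤ) :
    (u : ZMod p) * fermatQuotient p (u + p * t) = u * fermatQuotient p u - t := by
  have hut : ((u + p * t : ℤ) : ZMod p) ≠ 0 := by simpa using hu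
  obtain ⟨c, hc⟩ := sq_dvd_add_pow_sub_sub ((p : ZMod (p ^ 2)) * t) u (p - 1)
  rw [mul_pow, ZMod.natCast_self_sq_eq_zero, zero_mul, zero_mul, sub_sub, sub_eq_zero] at hc
  have hq := (intCast_eq_iff hut (fermatQuotient p u - t * u ^ (p - 2))).2 (by
    push_cast
    rw [hc, pow_sub_one_eq hu, Nat.cast_sub hp.out.one_le]
    linear_combination ((t : ZMod (p ^ 2)) * (u : ZMod (p ^ 2)) ^ (p - 1 - 1)) *
      ZMod.natCast_self_sq_eq_zero)
  have hfermat : (u : ZMod p) * u ^ (p - 2) = 1 := by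
    rw [← pow_succ', show p - 2 + 1 = p - 1 by have := hp.out.two_le; omega,
      ZMod.pow_card_sub_one_eq_one hu]
  rw [hq]
  push_cast
  linear_combination (-(t : ZMod p)) * hfermat

end fermatQuotient

lemma exists_isPrimitiveRoot_three {p : ℕ} [hp : Fact p.Prime] (h3 : p % 3 = 1) :
    ∃ ω : ZMod p, IsPrimitiveRoot ω 3 := by
  have : NeZero (p - 1) := ⟨by have := hp.out.two_le; omega⟩
  have := HasEnoughRootsOfUnity.of_dvd (ZMod p) (by omega : 3 ∣ p - 1)
  exact HasEnoughRootsOfUnity.exists_primitiveRoot _ 3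

lemma mul_fermatQuotient_eq_of_sq_add_add_one {p : ℕ} [hp : Fact p.Prime] (hp2 : p ≠ 2)
    (hp3 : p ≠ 3) {n : ℤ} (hn : (n : ZMod p) ^ 2 + n + 1 = 0) :
    (n : ZMod p) * fermatQuotient p n = (n + 1) * fermatQuotient p (n + 1) := by
  obtain ⟨k, hk⟩ : (p : ℤ) ∣ n ^ 2 + n + 1 := by
    rw [← ZMod.intCast_zmod_eq_zero_iff_dvd]; push_cast; exact hn
  have hn0 : (n : ZMod p) ≠ 0 := by rintro h; simp [h] at hn
  have hcube : (n : ZMod p) ^ 3 = 1 := by linear_combination ((n : ZMod p) - 1) * hn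
  have hq3 : 3 * (fermatQuotient p n : ZMod p) = -(k * (n - 1)) := by
    have h := fermatQuotient.mul_add_natCast_mul (p := p) (u := 1) (by simp) (k * (n - 1))
    rw [show 1 + p * (k * (n - 1)) = n ^ 3 by linear_combination -(n - 1) * hk,
      fermatQuotient.pow hn0, fermatQuotient.one] at h
    push_cast at h
    linear_combination h
  have hq2 : -(n : ZMod p) ^ 2 * fermatQuotient p (n + 1) =
      -(n : ZMod p) ^ 2 * (2 * fermatQuotient p n) - k := by
    have h := fermatQuotient.mul_add_natCast_mul (p := p) (u := -n ^ 2)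
      (by push_cast; simpa using hn0) k
    rw [show -n ^ 2 + p * k = n + 1 by linear_combination -hk, fermatQuotient.neg hp2,
      fermatQuotient.pow hn0] at h
    push_cast at h
    linear_combination h
  have h3 : (3 : ZMod p) ≠ 0 := by
    intro h
    exact hp3 ((Nat.prime_dvd_prime_iff_eq hp.out Nat.prime_three).1
      ((ZMod.natCast_eq_zero_iff 3 p).1 (by exact_mod_cast h)))
  refine mul_left_cancel₀ h3 ?_
  linear_combination ((n : ZMod p) + 2 * n ^ 2) * hq3 - 3 * hq2 +
    (k - 3 * fermatQuotient p (n + 1) : ZMod p) * hn - 2 * (k : ZMod p) * hcube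

theorem theta_zero_at_roots_general (p : ℕ) [Fact p.Prime] (h3 : p % 3 = 1) :
    (∀ s : ℕ, s ∈ Finset.Icc 1 (p - 2) → (s : ZMod p) ^ 2 + (s : ZMod p) + 1 = 0 →
      theta p (s : ℤ) = 0) ∧
    2 ≤ ((Finset.Icc 1 (p - 2)).filter (fun s : ℕ => theta p (s : ℤ) = 0)).card := by
  have hroots : ∀ s : ℕ, (s : ZMod p) ^ 2 + (s : ZMod p) + 1 = 0 → theta p (s : ℤ) = 0 := by
    intro s hs
    have h := mul_fermatQuotient_eq_of_sq_add_add_one (p := p) (by omega) (by omega) (n := s)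
      (by exact_mod_cast hs)
    rw [theta, legendreSym.eq_zero_iff]
    push_cast at h ⊢
    linear_combination (2 * s * (s + 1) : ZMod p) * h
  refine ⟨fun s _ ↦ hroots s, ?_⟩
  have hmem : ∀ ζ : ZMod p, IsPrimitiveRoot ζ 3 →
      ζ.val ∈ (Finset.Icc 1 (p - 2)).filter (fun s : ℕ => theta p (s : ℤ) = 0) := by
    intro ζ hζ
    refine Finset.mem_filter.2
      ⟨ZMod.val_mem_Icc_of_sq_add_add_one_eq_zero hζ.sq_add_self_add_one, hroots _ ?_⟩
    rw [ZMod.natCast_zmod_val]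
    exact hζ.sq_add_self_add_one
  obtain ⟨ω, hω⟩ := exists_isPrimitiveRoot_three h3
  have hne : ω.val ≠ (ω ^ 2).val := (ZMod.val_injective p).ne fun h ↦ absurd
    (hω.pow_inj (i := 1) (j := 2) (by norm_num) (by norm_num) (by rwa [pow_one])) (by norm_num)
  calc 2 = ({ω.val, (ω ^ 2).val} : Finset ℕ).card := (Finset.card_pair hne).symm
    _ ≤ _ := Finset.card_le_card <| Finset.insert_subset_iff.2
      ⟨hmem ω hω, Finset.singleton_subset_iff.2 (hmem _ (hω.pow_of_coprime 2 (by norm_num)))⟩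

theorem theta_zero_at_roots (p : ℕ) [Fact p.Prime] (hp5 : 5 ≤ p) (h3 : p % 3 = 1) :
    (∀ s : ℕ, s ∈ Finset.Icc 1 (p - 2) → (s : ZMod p) ^ 2 + (s : ZMod p) + 1 = 0 →
      theta p (s : ℤ) = 0) ∧
    2 ≤ ((Finset.Icc 1 (p - 2)).filter (fun s : ℕ => theta p (s : ℤ) = 0)).card :=
  theta_zero_at_roots_general p h3
end
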